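/- Fix β ∈ (0,1) and b ∈ ℝ. For r ∈ (0,1), let N(r) = (1/β)·Φ((b − √r·b)/√(1−r)) and D(r) = (4πβ√(r(1−r)))^{-1} · exp(−((1−√r)/(1−r))·b²). Then the ratio N(r)/D(r) tends to 0 as r → 1⁻. -/

import Mathlib

open Real MeasureTheory Filter Topology

/-- The standard normal density φ(x) = (2π)^{-1/2} exp(-x²/2). -/
noncomputable def stdNormalPDF (x : ℝ) : ℝ :=
  (Real.sqrt (2 * Real.pi))⁻¹ * Real.exp (-x ^ 2 / 2)

/-- The standard normal CDF Φ(x) = ∫_{-∞}^x φ(u) du. -/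
noncomputable def stdNormalCDF (x : ℝ) : ℝ :=
  ∫ u in Set.Iic x, stdNormalPDF u

/-- The standard bivariate normal density with correlation ρ. -/
noncomputable def biNormalPDF (x y ρ : ℝ) : ℝ :=
  (2 * Real.pi * Real.sqrt (1 - ρ ^ 2))⁻¹ *
    Real.exp (-(x ^ 2 - 2 * ρ * x * y + y ^ 2) / (2 * (1 - ρ ^ 2)))

/-- The standard bivariate normal CDF Φ₂(a, b; ρ). -/
noncomputable def biNormalCDF (a b ρ : ℝ) : ℝ :=
  ∫ x in Set.Iic a, ∫ y in Set.Iic b, biNormalPDF x y ρ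

/-- The inverse Φ⁻¹ of the standard normal CDF on (0,1). -/
noncomputable def stdNormalCDFInv (p : ℝ) : ℝ :=
  Function.invFun stdNormalCDF p

lemma stdNormalPDF_nonneg (x : ℝ) : 0 ≤ stdNormalPDF x :=
  mul_nonneg (inv_nonneg.2 (Real.sqrt_nonneg _)) (Real.exp_pos _).le

lemma stdNormalPDF_integrable : Integrable stdNormalPDF := by
  have h : Integrable (fun x : ℝ => Real.exp (-(1/2 : ℝ) * x ^ 2)) :=
    integrable_exp_neg_mul_sq (by norm_num)
  have h2 := h.const_mul (Real.sqrt (2 * Real.pi))⁻¹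
  convert h2 using 2 with x
  unfold stdNormalPDF
  ring_nf

lemma integral_stdNormalPDF : ∫ x, stdNormalPDF x = 1 := by
  unfold stdNormalPDF
  rw [MeasureTheory.integral_const_mul]
  have : ∀ x : ℝ, Real.exp (-x ^ 2 / 2) = Real.exp (-(1/2 : ℝ) * x ^ 2) := by
    intro x; ring_nf
  simp_rw [this, integral_gaussian]
  rw [show Real.pi / (1/2) = 2 * Real.pi by ring]
  rw [inv_mul_cancel₀]
  positivity

lemma stdNormalCDF_nonneg (x : ℝ) : 0 ≤ stdNormalCDF x :=
  setIntegral_nonneg measurableSet_Iic (fun u _ => stdNormalPDF_nonneg u)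

lemma stdNormalCDF_le_one (x : ℝ) : stdNormalCDF x ≤ 1 := by
  rw [← integral_stdNormalPDF]
  exact setIntegral_le_integral stdNormalPDF_integrable
    (Filter.Eventually.of_forall stdNormalPDF_nonneg)


/-- Fix β ∈ (0,1) and b ∈ ℝ. For r ∈ (0,1), let
N(r) = (1/β)·Φ((b − √r·b)/√(1−r)) and
D(r) = (4πβ√(r(1−r)))⁻¹ · exp(−((1−√r)/(1−r))·b²).
Then N(r)/D(r) → 0 as r → 1⁻. -/
theorem local_PAR_tendsto_zero_at_rsq_one (β b : ℝ) (hβ : β ∈ Set.Ioo (0 : ℝ) 1) :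
    Tendsto (fun r : ℝ =>
        ((1 / β) * stdNormalCDF ((b - Real.sqrt r * b) / Real.sqrt (1 - r))) /
          ((4 * Real.pi * β * Real.sqrt (r * (1 - r)))⁻¹ *
            Real.exp (-((1 - Real.sqrt r) / (1 - r)) * b ^ 2)))
      (𝓝[<] 1) (𝓝 0) := by
  obtain ⟨hβ0, hβ1⟩ := hβ
  set g : ℝ → ℝ := fun r => (4 * Real.pi * Real.exp (b ^ 2)) * Real.sqrt (1 - r) with hg
  have hmem : Set.Ioo (0 : ℝ) 1 ∈ 𝓝[<] (1 : ℝ) :=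
    Ioo_mem_nhdsLT_of_mem (by norm_num : (1:ℝ) ∈ Set.Ioc 0 1)
  apply squeeze_zero' (g := g)
  · filter_upwards [hmem] with r hr
    obtain ⟨hr0, hr1⟩ := hr
    have hA : (0:ℝ) < 4 * Real.pi * β * Real.sqrt (r * (1 - r)) := by
      have : (0:ℝ) < r * (1 - r) := mul_pos hr0 (by linarith)
      have := Real.sqrt_pos.2 this
      positivity
    have hN : 0 ≤ (1 / β) * stdNormalCDF ((b - Real.sqrt r * b) / Real.sqrt (1 - r)) :=
      mul_nonneg (by positivity) (stdNormalCDF_nonneg _)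
    positivity
  · filter_upwards [hmem] with r hr
    obtain ⟨hr0, hr1⟩ := hr
    set N := (1 / β) * stdNormalCDF ((b - Real.sqrt r * b) / Real.sqrt (1 - r)) with hNdef
    set A := 4 * Real.pi * β * Real.sqrt (r * (1 - r)) with hAdef
    set c := (1 - Real.sqrt r) / (1 - r) with hcdef
    have hApos : (0:ℝ) < A := by
      have : (0:ℝ) < r * (1 - r) := mul_pos hr0 (by linarith)
      have := Real.sqrt_pos.2 this
      rw [hAdef]; positivity
    have hrw : N / (A⁻¹ * Real.exp (-c * b ^ 2)) = N * (A * Real.exp (c * b ^ 2)) := by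
      rw [div_eq_mul_inv, mul_inv, inv_inv, show -c * b ^ 2 = -(c * b ^ 2) by ring,
        Real.exp_neg, inv_inv]
    rw [hrw]
    -- bounds
    have hN0 : 0 ≤ N := mul_nonneg (le_of_lt (by positivity)) (stdNormalCDF_nonneg _)
    have hN1 : N ≤ 1 / β := by
      have := stdNormalCDF_le_one ((b - Real.sqrt r * b) / Real.sqrt (1 - r))
      calc N ≤ (1 / β) * 1 := by
              apply mul_le_mul_of_nonneg_left this (by positivity)
        _ = 1 / β := mul_one _
    have hAle : A ≤ 4 * Real.pi * β * Real.sqrt (1 - r) := by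
      have h1 : r * (1 - r) ≤ 1 - r := by nlinarith
      have := Real.sqrt_le_sqrt h1
      rw [hAdef]
      apply mul_le_mul_of_nonneg_left this (by positivity)
    have hc1 : c ≤ 1 := by
      rw [hcdef, div_le_one (by linarith : (0:ℝ) < 1 - r)]
      have hsr : Real.sqrt r * Real.sqrt r = r := Real.mul_self_sqrt hr0.le
      have hsr1 : Real.sqrt r ≤ 1 := by
        rw [show (1:ℝ) = Real.sqrt 1 by simp]
        exact Real.sqrt_le_sqrt hr1.le
      nlinarith [Real.sqrt_nonneg r]
    have hE : Real.exp (c * b ^ 2) ≤ Real.exp (b ^ 2) := by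
      apply Real.exp_le_exp.2
      nlinarith [sq_nonneg b]
    calc N * (A * Real.exp (c * b ^ 2))
        ≤ (1 / β) * ((4 * Real.pi * β * Real.sqrt (1 - r)) * Real.exp (b ^ 2)) := by
          apply mul_le_mul hN1 _ (by positivity) (by positivity)
          exact mul_le_mul hAle hE (Real.exp_pos _).le (by positivity)
      _ = g r := by rw [hg]; field_simp
  · have h1 : Tendsto (fun r : ℝ => Real.sqrt (1 - r)) (𝓝 (1:ℝ)) (𝓝 0) := by
      have : Continuous fun r : ℝ => Real.sqrt (1 - r) :=
        Real.continuous_sqrt.comp (continuous_const.sub continuous_id)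
      have h := this.tendsto 1
      simpa using h
    have h2 := (h1.mono_left (nhdsWithin_le_nhds (s := Set.Iio (1:ℝ)))).const_mul (4 * Real.pi * Real.exp (b ^ 2))
    simpa [hg] using h2
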